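/- Let Ω ⊂ ℝⁿ be a special Lipschitz domain, (φ_j)_{j≥0} a Littlewood–Paley family associated with Ω, and (ψ_j)_{j≥0} Schwartz functions with vanishing moments, the scaling property ψ_j = 2^{(j−1)n}ψ₁(2^{j−1}·) for j ≥ 2, support in the cone K (so Ω − K ⊆ Ω), and Σ_j ψ_j ∗ φ_j = δ₀. Then the operator E_Ω f := Σ_{j≥0} ψ_j ∗ (𝟙_Ω · (φ_j ∗ f)) satisfies (E_Ω f)|_Ω = f for every f ∈ 𝒮′(Ω). -/

import Mathlib

/-! The cone condition `Ω - K ⊆ Ω` follows from the Lipschitz bound on `ρ`: if `x ∈ Ω` and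
`x - y ∈ K` then `y ∈ Ω`. As `ψ_j` is supported in `K`, for `x ∈ Ω` the value
`ψ_j ∗ (𝟙_Ω · g)(x)` only involves `g` on `Ω`, hence equals `ψ_j ∗ g (x)`. With `g = φ_j ∗ f`,
associativity of convolution (Fubini: `ψ_j, φ_j` are integrable and `f` is bounded) turns the
`j`-th term into `(ψ_j ∗ φ_j) ∗ f (x)`, and these sum to `f x` because `Σ_j ψ_j ∗ φ_j = δ₀`. -/

open MeasureTheory Filter Topology

/-- The first `m` coordinates of a point of `ℝ^{m+1}`. -/
noncomputable def initCoord (m : ℕ) (x : EuclideanSpace ℝ (Fin (m + 1))) :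
    EuclideanSpace ℝ (Fin m) :=
  WithLp.toLp 2 (fun i : Fin m => x i.castSucc)

/-- The last coordinate of a point of `ℝ^{m+1}`. -/
noncomputable def lastCoord (m : ℕ) (x : EuclideanSpace ℝ (Fin (m + 1))) : ℝ :=
  x (Fin.last m)

open scoped Convolution
open ContinuousLinearMap (mul)

section Convolution

variable {G : Type*} [AddCommGroup G] [MeasurableSpace G] [MeasurableAdd₂ G] [MeasurableNeg G]
  {μ : Measure G} [SFinite μ] [μ.IsAddLeftInvariant]

theorem MeasureTheory.Integrable.convolutionExistsAt_of_norm_le {f g : G → ℝ} {C : ℝ}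
    (hf : Integrable f μ) (hg : AEStronglyMeasurable g μ) (hgC : ∀ x, ‖g x‖ ≤ C) (x : G) :
    ConvolutionExistsAt f g x (mul ℝ ℝ) μ := by
  refine (hf.norm.mul_const C).mono' (hf.aestronglyMeasurable.convolution_integrand_snd _ hg x)
    (ae_of_all _ fun t => ?_)
  simpa only [ContinuousLinearMap.mul_apply', norm_mul] using
    mul_le_mul_of_nonneg_left (hgC (x - t)) (norm_nonneg (f t))

theorem convolution_assoc_of_norm_le {a b k : G → ℝ} {C : ℝ} (ha : Integrable a μ)
    (hb : Integrable b μ) (hk : AEStronglyMeasurable k μ) (hkC : ∀ x, ‖k x‖ ≤ C) (x₀ : G) :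
    ((a ⋆[mul ℝ ℝ, μ] b) ⋆[mul ℝ ℝ, μ] k) x₀ = (a ⋆[mul ℝ ℝ, μ] b ⋆[mul ℝ ℝ, μ] k) x₀ := by
  refine convolution_assoc' _ _ _ _ (fun x y z => mul_assoc x y z) (ha.ae_convolution_exists _ hb)
    (ae_of_all _ (hb.convolutionExistsAt_of_norm_le hk hkC)) ?_
  have hab : Integrable (fun p : G × G => a p.2 * b (p.1 - p.2)) (μ.prod μ) :=
    ha.convolution_integrand (mul ℝ ℝ) hb
  have hk₀ : AEStronglyMeasurable (fun p : G × G => k (x₀ - p.1)) (μ.prod μ) :=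
    (hk.comp_quasiMeasurePreserving
      (quasiMeasurePreserving_sub_left_of_right_invariant μ x₀)).comp_fst
  simp only [ContinuousLinearMap.mul_apply', Function.uncurry_def, ← mul_assoc]
  refine (hab.norm.mul_const C).mono' (hab.aestronglyMeasurable.mul hk₀) (ae_of_all _ fun p => ?_)
  rw [norm_mul]
  exact mul_le_mul_of_nonneg_left (hkC _) (norm_nonneg _)

theorem convolution_assoc_of_norm_le' [μ.IsNegInvariant] {a b k : G → ℝ} {C : ℝ}
    (ha : Integrable a μ) (hb : Integrable b μ) (hk : AEStronglyMeasurable k μ)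
    (hkC : ∀ x, ‖k x‖ ≤ C) (x : G) :
    ∫ y, a (x - y) * (∫ z, b (y - z) * k z ∂μ) ∂μ
      = ∫ y, (∫ z, a (y - z) * b z ∂μ) * k (x - y) ∂μ := by
  calc ∫ y, a (x - y) * (∫ z, b (y - z) * k z ∂μ) ∂μ
      = (a ⋆[mul ℝ ℝ, μ] b ⋆[mul ℝ ℝ, μ] k) x := by
        simp only [convolution_eq_swap, ContinuousLinearMap.mul_apply']
    _ = ((a ⋆[mul ℝ ℝ, μ] b) ⋆[mul ℝ ℝ, μ] k) x :=
        (convolution_assoc_of_norm_le ha hb hk hkC x).symm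
    _ = ∫ y, (∫ z, a (y - z) * b z ∂μ) * k (x - y) ∂μ := by
        rw [convolution_def]
        simp only [convolution_eq_swap, ContinuousLinearMap.mul_apply']

end Convolution

section Cone

variable {m : ℕ}

theorem initCoord_sub (x y : EuclideanSpace ℝ (Fin (m + 1))) :
    initCoord m (x - y) = initCoord m x - initCoord m y := by
  ext i
  simp [initCoord]

theorem lastCoord_sub (x y : EuclideanSpace ℝ (Fin (m + 1))) :
    lastCoord m (x - y) = lastCoord m x - lastCoord m y := by
  simp [lastCoord]

theorem LipschitzWith.lt_lastCoord_of_sub_mem_cone {ρ : EuclideanSpace ℝ (Fin m) → ℝ} {L : NNReal}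
    (hρ : LipschitzWith L ρ) {x y : EuclideanSpace ℝ (Fin (m + 1))}
    (hx : ρ (initCoord m x) < lastCoord m x)
    (hxy : lastCoord m (x - y) < -L * ‖initCoord m (x - y)‖) :
    ρ (initCoord m y) < lastCoord m y := by
  have hLip : ρ (initCoord m y) - ρ (initCoord m x) ≤ L * ‖initCoord m (x - y)‖ := by
    rw [initCoord_sub, ← dist_eq_norm, dist_comm]
    exact (le_abs_self _).trans (hρ.dist_le_mul _ _)
  rw [lastCoord_sub] at hxy
  linarith

end Cone

theorem stmt15_general (m : ℕ) (ρ : EuclideanSpace ℝ (Fin m) → ℝ) (M : ℝ) (hM : 0 ≤ M)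
    (hρ : LipschitzWith M.toNNReal ρ)
    (Ω K : Set (EuclideanSpace ℝ (Fin (m + 1))))
    (hΩ : Ω = {x | ρ (initCoord m x) < lastCoord m x})
    (hK : K = {x | lastCoord m x < -M * ‖initCoord m x‖})
    (φ ψ : ℕ → SchwartzMap (EuclideanSpace ℝ (Fin (m + 1))) ℝ)
    (hψsupp : ∀ j, Function.support (ψ j) ⊆ K)
    (f : EuclideanSpace ℝ (Fin (m + 1)) → ℝ)
    (hf : Continuous f) (hfb : ∃ Cf : ℝ, ∀ x, |f x| ≤ Cf)
    -- `Σ_j ψ_j ∗ φ_j = δ₀`, tested against translates of `f`: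
    (hδ : ∀ x, Tendsto
      (fun mm => ∑ j ∈ Finset.range mm, ∫ y, (∫ z, ψ j (y - z) * φ j z) * f (x - y))
      atTop (𝓝 (f x))) :
    ∀ x ∈ Ω, Tendsto
      (fun mm => ∑ j ∈ Finset.range mm,
        ∫ y, ψ j (x - y) * Set.indicator Ω (fun y' => ∫ z, φ j (y' - z) * f z) y)
      atTop (𝓝 (f x)) := by
  intro x hx
  obtain ⟨C, hC⟩ := hfb
  have hcone : ∀ j y, ψ j (x - y) ≠ 0 → y ∈ Ω := fun j y hy => by
    have hxy := hψsupp j hy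
    rw [hK, Set.mem_ofPred_eq, ← Real.coe_toNNReal M hM] at hxy
    rw [hΩ] at hx ⊢
    exact hρ.lt_lastCoord_of_sub_mem_cone hx hxy
  refine (hδ x).congr fun N => Finset.sum_congr rfl fun j _ => ?_
  rw [← convolution_assoc_of_norm_le' (ψ j).integrable (φ j).integrable
    hf.aestronglyMeasurable (fun y => (Real.norm_eq_abs _).trans_le (hC y))]
  congr 1 with y
  by_cases hy : ψ j (x - y) = 0
  · simp only [hy, zero_mul]
  · rw [Set.indicator_of_mem (hcone j y hy)]

/-- **Rychkov's extension operator restricts to the identity on `Ω`.** Let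
`Ω = {xₙ > ρ(x')}` be a special Lipschitz domain, `(φ_j)` a Littlewood–Paley family
associated with `Ω` (vanishing moments for `φ₁`, scaling for `j ≥ 2`, `Σ_j φ_j = δ₀`,
support in the cone `K = {xₙ < −M|x'|}`), and `(ψ_j)` Schwartz functions with vanishing
moments, the same scaling, support in `K`, and `Σ_j ψ_j ∗ φ_j = δ₀`. Then
`E_Ω f := Σ_j ψ_j ∗ (𝟙_Ω · (φ_j ∗ f))` satisfies `(E_Ω f)|_Ω = f`. -/
theorem stmt15 (m : ℕ) (ρ : EuclideanSpace ℝ (Fin m) → ℝ) (M : ℝ) (hM : 0 ≤ M)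
    (hρ : LipschitzWith M.toNNReal ρ)
    (Ω K : Set (EuclideanSpace ℝ (Fin (m + 1))))
    (hΩ : Ω = {x | ρ (initCoord m x) < lastCoord m x})
    (hK : K = {x | lastCoord m x < -M * ‖initCoord m x‖})
    (φ ψ : ℕ → SchwartzMap (EuclideanSpace ℝ (Fin (m + 1))) ℝ)
    (hφsupp : ∀ j, Function.support (φ j) ⊆ K)
    (hψsupp : ∀ j, Function.support (ψ j) ⊆ K)
    (hφmom : ∀ α : Fin (m + 1) → ℕ,
      ∫ x : EuclideanSpace ℝ (Fin (m + 1)), (∏ i, x i ^ α i) * φ 1 x = 0)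
    (hψmom : ∀ α : Fin (m + 1) → ℕ,
      ∫ x : EuclideanSpace ℝ (Fin (m + 1)), (∏ i, x i ^ α i) * ψ 1 x = 0)
    (hφscal : ∀ j : ℕ, 2 ≤ j → ∀ x,
      φ j x = 2 ^ ((j - 1) * (m + 1)) * φ 1 ((2 : ℝ) ^ (j - 1) • x))
    (hψscal : ∀ j : ℕ, 2 ≤ j → ∀ x,
      ψ j x = 2 ^ ((j - 1) * (m + 1)) * ψ 1 ((2 : ℝ) ^ (j - 1) • x))
    (f : EuclideanSpace ℝ (Fin (m + 1)) → ℝ)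
    (hf : Continuous f) (hfb : ∃ Cf : ℝ, ∀ x, |f x| ≤ Cf)
    -- `Σ_j φ_j = δ₀`, tested against translates of `f`:
    (hδφ : ∀ x, Tendsto
      (fun mm => ∑ j ∈ Finset.range mm, ∫ y, φ j y * f (x - y)) atTop (𝓝 (f x)))
    -- `Σ_j ψ_j ∗ φ_j = δ₀`, tested against translates of `f`:
    (hδ : ∀ x, Tendsto
      (fun mm => ∑ j ∈ Finset.range mm, ∫ y, (∫ z, ψ j (y - z) * φ j z) * f (x - y))
      atTop (𝓝 (f x))) :
    ∀ x ∈ Ω, Tendsto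
      (fun mm => ∑ j ∈ Finset.range mm,
        ∫ y, ψ j (x - y) * Set.indicator Ω (fun y' => ∫ z, φ j (y' - z) * f z) y)
      atTop (𝓝 (f x)) :=
  stmt15_general m ρ M hM hρ Ω K hΩ hK φ ψ hψsupp f hf hfb hδ
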